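/- Let A be a 2×2×2 array of positive integers such that all six 2×2 cross sections (the two layers in each of the three axis directions) have determinant 1. Then there is an integer n such that A has entries a₀₀₀ = F(2n-3), a₀₀₁ = a₀₁₀ = a₁₀₀ = F(2n-1), a₀₁₁ = a₁₀₁ = a₁₁₀ = F(2n+1), a₁₁₁ = F(2n+3), where F is the Fibonacci sequence extended to ℤ. -/

import Mathlib

/-!
Write `a, b, …, h` for the entries `A 0 0 0, A 0 0 1, …, A 1 1 1`. The Plücker relation among
the 2×2 minors of the 2×4 matrix with rows `(a, b, c, d)` and `(e, f, g, h)` reads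
`(a h - d e) (b g - c f) = 0`; positivity rules out `a h = d e`, and `b g = c f` forces `b = c`
and `f = g`. By the symmetry of the cube, `b = c = e` and `d = f = g`, so the cube is a chain
`a, b, d, h` with `a d = b² + 1` and `b h = d² + 1`. Then `b ∣ d² + 1` and `d ∣ b² + 1`, and
Vieta jumping `(p, q) ↦ ((p² + 1) / q, p)` descends to `(1, 1)`; climbing back up reproduces
consecutive odd-indexed Fibonacci numbers by Cassini's identity
`F (n - 2) F (n + 2) = F n ² + 1` for odd `n`.
-/

namespace Int

theorem eq_fib_of_recurrence {F : ℤ → ℤ} (hF0 : F 0 = 0) (hF1 : F 1 = 1)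
    (hrec : ∀ n : ℤ, F (n + 1) = F n + F (n - 1)) : F = fib := by
  suffices h : ∀ n, F n = fib n ∧ F (n + 1) = fib (n + 1) from funext fun n => (h n).1
  intro n
  induction n with
  | zero => simp [hF0, hF1]
  | succ i ih =>
    refine ⟨ih.2, ?_⟩
    have := hrec (i + 1)
    have := fib_add_two (i : ℤ)
    grind
  | pred i ih =>
    refine ⟨?_, by simpa using ih.1⟩
    have := hrec (-i)
    have := fib_add_two (-i - 1 : ℤ)
    grind

theorem fib_sub_two_mul_fib_add_two {n : ℤ} (hn : Odd n) :
    fib (n - 2) * fib (n + 2) = fib n ^ 2 + 1 := by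
  have h := fib_add_sq_sub_fib_mul_fib_add_two_mul (n - 2) 2
  rw [(natAbs_odd.2 (hn.sub_even even_two)).neg_one_pow, fib_two, sub_add_cancel,
    show n - 2 + 2 * 2 = n + 2 by ring] at h
  linarith

theorem dvd_sq_add_one_of_mul_eq {p q r : ℤ} (hpq : p ∣ q ^ 2 + 1) (hqr : q * r = p ^ 2 + 1) :
    p ∣ r ^ 2 + 1 := by
  obtain ⟨t, ht⟩ := hpq
  have hcop : IsCoprime p (q ^ 2) := IsCoprime.pow_right ⟨-p, r, by linear_combination hqr⟩
  exact hcop.dvd_of_dvd_mul_left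
    ⟨p ^ 3 + 2 * p + t, by linear_combination (q * r + p ^ 2 + 1) * hqr + ht⟩

theorem exists_eq_fib_of_dvd_sq_add_one {p q : ℤ} (hp : 0 < p) (hq : 0 < q)
    (hpq : p ∣ q ^ 2 + 1) (hqp : q ∣ p ^ 2 + 1) :
    ∃ n, p = fib (2 * n - 1) ∧ q = fib (2 * n + 1) := by
  rcases lt_trichotomy p q with hlt | rfl | hgt
  · obtain ⟨r, hr⟩ := hqp
    have hr0 : 0 < r := by nlinarith
    have hrp : r ≤ p := by nlinarith
    obtain ⟨n, rfl, rfl⟩ := exists_eq_fib_of_dvd_sq_add_one hr0 hp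
      ⟨q, by linear_combination hr⟩ (dvd_sq_add_one_of_mul_eq hpq hr.symm)
    have hcas := fib_sub_two_mul_fib_add_two (n := 2 * n + 1) ⟨n, rfl⟩
    refine ⟨n + 1, by ring_nf, mul_left_cancel₀ hr0.ne' ?_⟩
    ring_nf at hcas hr ⊢
    linarith
  · have hp1 : p = 1 :=
      eq_one_of_dvd_one hp.le ((Int.dvd_add_right (dvd_pow_self p two_ne_zero)).1 hpq)
    exact ⟨0, by simp [hp1], by simp [hp1]⟩
  · obtain ⟨s, hs⟩ := hpq
    have hs0 : 0 < s := by nlinarith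
    have hsq : s ≤ q := by nlinarith
    obtain ⟨n, rfl, rfl⟩ := exists_eq_fib_of_dvd_sq_add_one hq hs0
      (dvd_sq_add_one_of_mul_eq hqp hs.symm) ⟨p, by linear_combination hs⟩
    have hcas := fib_sub_two_mul_fib_add_two (n := 2 * n - 1) ⟨n - 1, by ring⟩
    refine ⟨n - 1, mul_left_cancel₀ hs0.ne' ?_, by ring_nf⟩
    ring_nf at hcas hs ⊢
    linarith
termination_by (p + q).toNat
decreasing_by all_goals omega

theorem exists_eq_fib_of_mul_eq_sq_add_one {a b d h : ℤ} (hb : 0 < b) (hd : 0 < d)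
    (had : a * d = b ^ 2 + 1) (hbh : b * h = d ^ 2 + 1) :
    ∃ n, a = fib (2 * n - 3) ∧ b = fib (2 * n - 1) ∧ d = fib (2 * n + 1) ∧
      h = fib (2 * n + 3) := by
  obtain ⟨n, rfl, rfl⟩ := exists_eq_fib_of_dvd_sq_add_one hb hd ⟨h, hbh.symm⟩ ⟨a, by linarith⟩
  have hcas₁ := fib_sub_two_mul_fib_add_two (n := 2 * n - 1) ⟨n - 1, by ring⟩
  have hcas₂ := fib_sub_two_mul_fib_add_two (n := 2 * n + 1) ⟨n, rfl⟩
  refine ⟨n, mul_right_cancel₀ hd.ne' ?_, rfl, rfl, mul_left_cancel₀ hb.ne' ?_⟩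
  · ring_nf at hcas₁ had ⊢
    linarith
  · ring_nf at hcas₂ hbh ⊢
    linarith

end Int

section CrossSections

variable {a b c d e f g h : ℤ}

theorem mul_ne_mul_of_cross_sections (pa : 0 < a) (pb : 0 < b) (pd : 0 < d) (pf : 0 < f)
    (ph : 0 < h) (h1 : a * d - b * c = 1) (h2 : e * h - f * g = 1) (h3 : a * f - b * e = 1)
    (h4 : c * h - d * g = 1) (h5 : a * g - c * e = 1) (h6 : b * h - d * f = 1) :
    a * h ≠ d * e := by
  intro hK
  have he : e ^ 2 = a ^ 2 + 1 + e * (b + c) := by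
    linear_combination (-e ^ 2) * h1 + a ^ 2 * h2 + a * g * h3 + (1 + b * e) * h5 - a * e * hK
  have hd : d ^ 2 = h ^ 2 + 1 + d * (f + g) := by
    linear_combination (-d ^ 2) * h2 + h ^ 2 * h1 + h * b * h4 + (1 + g * d) * h6 - h * d * hK
  have hae : a < e := by nlinarith
  have hhd : h < d := by nlinarith
  have hfb : f < b := by nlinarith
  nlinarith

theorem eq_and_eq_of_cross_sections (pa : 0 < a) (pb : 0 < b) (pd : 0 < d) (pf : 0 < f)
    (ph : 0 < h) (h1 : a * d - b * c = 1) (h2 : e * h - f * g = 1) (h3 : a * f - b * e = 1)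
    (h4 : c * h - d * g = 1) (h5 : a * g - c * e = 1) (h6 : b * h - d * f = 1) :
    b = c ∧ f = g := by
  have plucker : (a * h - d * e) * (b * g - c * f) = 0 := by
    linear_combination (b * h - d * f) * h5 + h6 - (c * h - d * g) * h3 - h4
  rcases mul_eq_zero.1 plucker with hK | hK
  · exact absurd (sub_eq_zero.1 hK)
      (mul_ne_mul_of_cross_sections pa pb pd pf ph h1 h2 h3 h4 h5 h6)
  · exact ⟨by linear_combination a * hK - b * h5 + c * h3,
      by linear_combination e * hK + g * h3 - f * h5⟩

end CrossSections

/-- a positive 2×2×2 integer cube all of whose six 2×2 cross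
sections have determinant 1 is of the Fibonacci form A_n. -/
theorem positive_cube_sl2_cross_sections
    (F : ℤ → ℤ) (hF0 : F 0 = 0) (hF1 : F 1 = 1)
    (hrec : ∀ n : ℤ, F (n + 1) = F n + F (n - 1))
    (A : Fin 2 → Fin 2 → Fin 2 → ℤ)
    (hpos : ∀ i j k, 0 < A i j k)
    (hcross1 : ∀ i, A i 0 0 * A i 1 1 - A i 0 1 * A i 1 0 = 1)
    (hcross2 : ∀ j, A 0 j 0 * A 1 j 1 - A 0 j 1 * A 1 j 0 = 1)
    (hcross3 : ∀ k, A 0 0 k * A 1 1 k - A 0 1 k * A 1 0 k = 1) :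
    ∃ n : ℤ,
      A 0 0 0 = F (2 * n - 3) ∧
      A 0 0 1 = F (2 * n - 1) ∧ A 0 1 0 = F (2 * n - 1) ∧ A 1 0 0 = F (2 * n - 1) ∧
      A 0 1 1 = F (2 * n + 1) ∧ A 1 0 1 = F (2 * n + 1) ∧ A 1 1 0 = F (2 * n + 1) ∧
      A 1 1 1 = F (2 * n + 3) := by
  obtain rfl := Int.eq_fib_of_recurrence hF0 hF1 hrec
  obtain ⟨hbc, hfg⟩ := eq_and_eq_of_cross_sections (hpos 0 0 0) (hpos 0 0 1) (hpos 0 1 1)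
    (hpos 1 0 1) (hpos 1 1 1) (hcross1 0) (hcross1 1) (hcross2 0) (hcross2 1) (hcross3 0)
    (hcross3 1)
  -- the same lemma for the cube with its first two axes swapped
  obtain ⟨hbe, hdg⟩ := eq_and_eq_of_cross_sections (hpos 0 0 0) (hpos 0 0 1) (hpos 1 0 1)
    (hpos 0 1 1) (hpos 1 1 1) (hcross2 0) (hcross2 1) (hcross1 0) (hcross1 1)
    (by linear_combination hcross3 0) (by linear_combination hcross3 1)
  have had : A 0 0 0 * A 0 1 1 = A 0 0 1 ^ 2 + 1 := by
    linear_combination hcross1 0 - A 0 0 1 * hbc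
  have hbh : A 0 0 1 * A 1 1 1 = A 0 1 1 ^ 2 + 1 := by
    have h := hcross1 1
    rw [← hbe, hfg, ← hdg] at h
    linear_combination h
  obtain ⟨n, ha, hb, hd, hh⟩ :=
    Int.exists_eq_fib_of_mul_eq_sq_add_one (hpos 0 0 1) (hpos 0 1 1) had hbh
  exact ⟨n, ha, hb, hbc ▸ hb, hbe ▸ hb, hd, hfg ▸ hdg ▸ hd, hdg ▸ hd, hh⟩
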